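/- Let u^1,...,u^k be C^2 solutions of ∂_t u^i = ∇·( m |𝐮|^{m-1} ∇u^i ) on an open set where w̄ = |𝐮| = (∑_i (u^i)^2)^{1/2} > 0. Then w̄ satisfies ∂_t w̄ = ∇·( m w̄^{m-1} ∇w̄ ) + m w̄^{m-2} ( |∇w̄|^2 − ∑_{i=1}^k |∇u^i|^2 ), and in particular ∂_t w̄ ≤ Δ( w̄^m ), i.e. the norm of a solution of the system is a subsolution of the scalar porous medium equation. -/

import Mathlib

/-!
Differentiating `w̄² = ∑ᵢ (uⁱ)²` once gives `w̄ ∂w̄ = ∑ᵢ uⁱ ∂uⁱ`, both in time and in every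
spatial direction, and differentiating the spatial identity once more gives
`(∂w̄)² + w̄ ∂²w̄ = ∑ᵢ ((∂uⁱ)² + uⁱ ∂²uⁱ)`. Multiplying the `i`-th equation by `uⁱ` and summing,
these two identities turn `∑ᵢ uⁱ ∂_t uⁱ` into `w̄` times the right-hand side of the equation for
`w̄`. The correction term `m w̄^{m-2} (|∇w̄|² − ∑ᵢ |∇uⁱ|²)` is nonpositive by Cauchy–Schwarz applied
to `w̄ ∂w̄ = ∑ᵢ uⁱ ∂uⁱ`, and `m w̄^{m-1} ∂w̄ = ∂(w̄^m)` identifies the flux term with `Δ(w̄^m)`.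
-/

open Finset

section Calculus

variable {E : Type*} [NormedAddCommGroup E] [NormedSpace ℝ E]

theorem fderiv_fun_mul_apply {f h : E → ℝ} {x : E} (hf : DifferentiableAt ℝ f x)
    (hh : DifferentiableAt ℝ h x) (v : E) :
    fderiv ℝ (fun y => f y * h y) x v = fderiv ℝ f x v * h x + f x * fderiv ℝ h x v := by
  rw [fderiv_fun_mul hf hh]
  simp only [add_apply, smul_apply, smul_eq_mul]
  ring

theorem fderiv_rpow_const_apply {f : E → ℝ} {x : E} (hf : DifferentiableAt ℝ f x)
    (hx : f x ≠ 0) (p : ℝ) (v : E) :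
    fderiv ℝ (fun y => f y ^ p) x v = p * f x ^ (p - 1) * fderiv ℝ f x v := by
  rw [(hf.hasFDerivAt.rpow_const (Or.inl hx)).fderiv]
  rfl

theorem ContDiff.differentiable_fderiv_apply {f : E → ℝ} (hf : ContDiff ℝ 2 f) (v : E) :
    Differentiable ℝ (fun y => fderiv ℝ f y v) :=
  ((ContinuousLinearMap.apply ℝ ℝ v).contDiff.comp
    (hf.fderiv_right (m := 1) (by norm_num))).differentiable (by norm_num)

theorem fderiv_mul_rpow_mul_fderiv_apply {w f : E → ℝ} {x v : E} (m : ℝ)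
    (hw : DifferentiableAt ℝ w x) (hx : w x ≠ 0)
    (hf : DifferentiableAt ℝ (fun y => fderiv ℝ f y v) x) :
    fderiv ℝ (fun y => m * w y ^ (m - 1) * fderiv ℝ f y v) x v
      = m * (m - 1) * w x ^ (m - 2) * fderiv ℝ w x v * fderiv ℝ f x v
        + m * w x ^ (m - 1) * fderiv ℝ (fun y => fderiv ℝ f y v) x v := by
  have hpow : DifferentiableAt ℝ (fun y => m * w y ^ (m - 1)) x :=
    (hw.hasFDerivAt.rpow_const (Or.inl hx)).differentiableAt.const_mul m
  rw [fderiv_fun_mul_apply hpow hf, fderiv_const_mul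
    (hw.hasFDerivAt.rpow_const (Or.inl hx)).differentiableAt, smul_apply,
    smul_eq_mul, fderiv_rpow_const_apply hw hx, show m - 1 - 1 = m - 2 by ring]
  ring

end Calculus

section SqrtSumSq

variable {E ι : Type*} [NormedAddCommGroup E] [NormedSpace ℝ E] [Fintype ι]
  {g : ι → E → ℝ} {w : E → ℝ}

theorem contDiff_of_eq_sqrt_sum_sq {n : WithTop ℕ∞} (hw : ∀ y, w y = √(∑ i, g i y ^ 2))
    (hpos : ∀ y, 0 < w y) (hg : ∀ i, ContDiff ℝ n (g i)) : ContDiff ℝ n w := by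
  rw [funext hw]
  refine (ContDiff.sum fun i _ => (hg i).pow 2).sqrt fun y => ?_
  exact (Real.sqrt_pos.mp (hw y ▸ hpos y)).ne'

theorem mul_fderiv_eq_sum_mul_fderiv (hw : ∀ y, w y = √(∑ i, g i y ^ 2)) {x : E}
    (hx : 0 < w x) (hg : ∀ i, DifferentiableAt ℝ (g i) x) (v : E) :
    w x * fderiv ℝ w x v = ∑ i, g i x * fderiv ℝ (g i) x v := by
  have hsum : (∑ i, g i x ^ 2) ≠ 0 := (Real.sqrt_pos.mp (hw x ▸ hx)).ne'
  rw [funext hw, ((HasFDerivAt.fun_sum fun i _ => (hg i).hasFDerivAt.pow 2).sqrt hsum).fderiv]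
  simp only [smul_apply, _root_.sum_apply, smul_eq_mul, ← hw]
  field_simp
  simp only [mul_sum, nsmul_eq_mul]
  exact sum_congr rfl fun i _ => by ring

theorem sq_fderiv_le_sum_sq_fderiv (hw : ∀ y, w y = √(∑ i, g i y ^ 2)) {x : E}
    (hx : 0 < w x) (hg : ∀ i, DifferentiableAt ℝ (g i) x) (v : E) :
    fderiv ℝ w x v ^ 2 ≤ ∑ i, fderiv ℝ (g i) x v ^ 2 := by
  have hsq : ∑ i, g i x ^ 2 = w x ^ 2 := by
    rw [hw x, Real.sq_sqrt (sum_nonneg fun i _ => sq_nonneg _)]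
  have hcs := sum_mul_sq_le_sq_mul_sq univ (fun i => g i x) (fun i => fderiv ℝ (g i) x v)
  rw [← mul_fderiv_eq_sum_mul_fderiv hw hx hg, hsq, mul_pow] at hcs
  exact le_of_mul_le_mul_left hcs (by positivity)

theorem sq_fderiv_add_mul_fderiv_fderiv (hw : ∀ y, w y = √(∑ i, g i y ^ 2))
    (hpos : ∀ y, 0 < w y) (hg : ∀ i, ContDiff ℝ 2 (g i)) (x v : E) :
    fderiv ℝ w x v ^ 2 + w x * fderiv ℝ (fun y => fderiv ℝ w y v) x v
      = ∑ i, (fderiv ℝ (g i) x v ^ 2 + g i x * fderiv ℝ (fun y => fderiv ℝ (g i) y v) x v) := by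
  have hgd i : Differentiable ℝ (g i) := (hg i).differentiable (by norm_num)
  have hwC := contDiff_of_eq_sqrt_sum_sq hw hpos hg
  have hfirst : (fun y => w y * fderiv ℝ w y v)
      = fun y => ∑ i, g i y * fderiv ℝ (g i) y v :=
    funext fun y => mul_fderiv_eq_sum_mul_fderiv hw (hpos y) (fun i => hgd i y) v
  have hprod := congrArg (fun f => fderiv ℝ f x v) hfirst
  rw [fderiv_fun_mul_apply (hwC.differentiable (by norm_num) x)
      (hwC.differentiable_fderiv_apply v x),
    fderiv_fun_sum (A := fun i y => g i y * fderiv ℝ (g i) y v) fun i _ => (hgd i x).mul ((hg i).differentiable_fderiv_apply v x),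
    _root_.sum_apply] at hprod
  simp only [fderiv_fun_mul_apply (hgd _ x) ((hg _).differentiable_fderiv_apply v x)] at hprod
  rw [sq, hprod]
  exact sum_congr rfl fun i _ => by ring

theorem sum_mul_fderiv_flux_apply (hw : ∀ y, w y = √(∑ i, g i y ^ 2))
    (hpos : ∀ y, 0 < w y) (hg : ∀ i, ContDiff ℝ 2 (g i)) (m : ℝ) (x v : E) :
    ∑ i, g i x * fderiv ℝ (fun y => m * w y ^ (m - 1) * fderiv ℝ (g i) y v) x v
      = w x * (fderiv ℝ (fun y => m * w y ^ (m - 1) * fderiv ℝ w y v) x v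
          + m * w x ^ (m - 2) * (fderiv ℝ w x v ^ 2 - ∑ i, fderiv ℝ (g i) x v ^ 2)) := by
  have hgd i : Differentiable ℝ (g i) := (hg i).differentiable (by norm_num)
  have hwC := contDiff_of_eq_sqrt_sum_sq hw hpos hg
  have hx := (hpos x).ne'
  have hfirst := mul_fderiv_eq_sum_mul_fderiv hw (hpos x) (hgd · x) v
  have hsecond : ∑ i, g i x * fderiv ℝ (fun y => fderiv ℝ (g i) y v) x v
      = fderiv ℝ w x v ^ 2 + w x * fderiv ℝ (fun y => fderiv ℝ w y v) x v
        - ∑ i, fderiv ℝ (g i) x v ^ 2 := by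
    rw [sq_fderiv_add_mul_fderiv_fderiv hw hpos hg, sum_add_distrib]
    ring
  have hpow : w x ^ (m - 1) = w x ^ (m - 2) * w x := by
    rw [← Real.rpow_add_one hx]
    ring_nf
  simp only [fderiv_mul_rpow_mul_fderiv_apply m (hwC.differentiable (by norm_num) x) hx
    ((hg _).differentiable_fderiv_apply v x), fderiv_mul_rpow_mul_fderiv_apply m
    (hwC.differentiable (by norm_num) x) hx (hwC.differentiable_fderiv_apply v x)]
  calc _ = m * (m - 1) * w x ^ (m - 2) * fderiv ℝ w x v * ∑ i, g i x * fderiv ℝ (g i) x v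
        + m * w x ^ (m - 1) * ∑ i, g i x * fderiv ℝ (fun y => fderiv ℝ (g i) y v) x v := by
        rw [mul_sum, mul_sum, ← sum_add_distrib]
        exact sum_congr rfl fun i _ => by ring
    _ = _ := by
        rw [← hfirst, hsecond, hpow]
        ring

variable {J : Type*} [Fintype J]

theorem sum_mul_sum_fderiv_flux (hw : ∀ y, w y = √(∑ i, g i y ^ 2))
    (hpos : ∀ y, 0 < w y) (hg : ∀ i, ContDiff ℝ 2 (g i)) (m : ℝ) (x : E) (e : J → E) :
    ∑ i, g i x * ∑ j, fderiv ℝ (fun y => m * w y ^ (m - 1) * fderiv ℝ (g i) y (e j)) x (e j)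
      = w x * ((∑ j, fderiv ℝ (fun y => m * w y ^ (m - 1) * fderiv ℝ w y (e j)) x (e j))
          + m * w x ^ (m - 2) * ((∑ j, fderiv ℝ w x (e j) ^ 2)
            - ∑ i, ∑ j, fderiv ℝ (g i) x (e j) ^ 2)) := by
  calc _ = ∑ j, ∑ i, g i x * fderiv ℝ (fun y => m * w y ^ (m - 1) * fderiv ℝ (g i) y (e j))
        x (e j) := by
        simp only [mul_sum]
        exact sum_comm
    _ = ∑ j, w x * (fderiv ℝ (fun y => m * w y ^ (m - 1) * fderiv ℝ w y (e j)) x (e j)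
          + m * w x ^ (m - 2) * (fderiv ℝ w x (e j) ^ 2 - ∑ i, fderiv ℝ (g i) x (e j) ^ 2)) :=
        sum_congr rfl fun j _ => sum_mul_fderiv_flux_apply hw hpos hg m x (e j)
    _ = _ := by
        rw [← mul_sum, sum_add_distrib, ← mul_sum, sum_sub_distrib, sum_comm (s := univ)]

theorem sum_fderiv_flux_add_le_sum_fderiv_fderiv_rpow (hw : ∀ y, w y = √(∑ i, g i y ^ 2))
    (hpos : ∀ y, 0 < w y) (hg : ∀ i, ContDiff ℝ 1 (g i)) {m : ℝ} (hm : 0 ≤ m) (x : E)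
    (e : J → E) :
    (∑ j, fderiv ℝ (fun y => m * w y ^ (m - 1) * fderiv ℝ w y (e j)) x (e j))
        + m * w x ^ (m - 2) * ((∑ j, fderiv ℝ w x (e j) ^ 2)
          - ∑ i, ∑ j, fderiv ℝ (g i) x (e j) ^ 2)
      ≤ ∑ j, fderiv ℝ (fun y => fderiv ℝ (fun z => w z ^ m) y (e j)) x (e j) := by
  have hwd : Differentiable ℝ w :=
    (contDiff_of_eq_sqrt_sum_sq hw hpos hg).differentiable one_ne_zero
  have hpow y v : fderiv ℝ (fun z => w z ^ m) y v = m * w y ^ (m - 1) * fderiv ℝ w y v :=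
    fderiv_rpow_const_apply (hwd y) (hpos y).ne' m v
  have hcs : ∑ j, fderiv ℝ w x (e j) ^ 2 ≤ ∑ i, ∑ j, fderiv ℝ (g i) x (e j) ^ 2 := by
    rw [sum_comm]
    exact sum_le_sum fun j _ => sq_fderiv_le_sum_sq_fderiv hw (hpos x)
      (fun i => (hg i).differentiable one_ne_zero x) (e j)
  have hx := hpos x
  simp only [hpow]
  linarith [mul_nonpos_of_nonneg_of_nonpos (by positivity : 0 ≤ m * w x ^ (m - 2))
    (sub_nonpos.mpr hcs)]

end SqrtSumSq

theorem stmt7_general (n k : ℕ) (m : ℝ) (hm : 1 < m)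
    (u : Fin k → EuclideanSpace ℝ (Fin n) → ℝ → ℝ)
    (hsmooth : ∀ i, ContDiff ℝ 2 (fun p : EuclideanSpace ℝ (Fin n) × ℝ => u i p.1 p.2))
    (wb : EuclideanSpace ℝ (Fin n) → ℝ → ℝ)
    (hwb : ∀ x t, wb x t = Real.sqrt (∑ i, (u i x t) ^ 2))
    (hpos : ∀ x t, 0 < wb x t)
    (heq : ∀ i x t, deriv (fun s => u i x s) t
      = ∑ j : Fin n,
          fderiv ℝ (fun y =>
            m * (wb y t) ^ (m - 1)
              * fderiv ℝ (fun z => u i z t) y (EuclideanSpace.single j 1))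
            x (EuclideanSpace.single j 1)) :
    ∀ x t,
      deriv (fun s => wb x s) t
        = (∑ j : Fin n,
            fderiv ℝ (fun y =>
              m * (wb y t) ^ (m - 1)
                * fderiv ℝ (fun z => wb z t) y (EuclideanSpace.single j 1))
              x (EuclideanSpace.single j 1))
          + m * (wb x t) ^ (m - 2)
              * ((∑ j : Fin n, (fderiv ℝ (fun z => wb z t) x (EuclideanSpace.single j 1)) ^ 2)
                - ∑ i, ∑ j : Fin n,
                    (fderiv ℝ (fun z => u i z t) x (EuclideanSpace.single j 1)) ^ 2)
      ∧ deriv (fun s => wb x s) t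
          ≤ ∑ j : Fin n,
              fderiv ℝ (fun y =>
                fderiv ℝ (fun z => (wb z t) ^ m) y (EuclideanSpace.single j 1))
                x (EuclideanSpace.single j 1) := by
  intro x t
  have hslice i : ContDiff ℝ 2 (fun y => u i y t) :=
    (hsmooth i).comp (contDiff_id.prodMk contDiff_const)
  have hpath i : DifferentiableAt ℝ (fun s => u i x s) t :=
    (((hsmooth i).differentiable two_ne_zero).comp
      ((differentiable_const x).prodMk differentiable_id)) t
  -- `deriv f t` is `fderiv ℝ f t 1`, so the first-order identity applies with `E = ℝ`.
  have hrate : wb x t * deriv (fun s => wb x s) t = ∑ i, u i x t * deriv (fun s => u i x s) t :=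
    mul_fderiv_eq_sum_mul_fderiv (fun s => hwb x s) (hpos x t) hpath 1
  simp only [heq] at hrate
  rw [sum_mul_sum_fderiv_flux (fun y => hwb y t) (fun y => hpos y t) hslice m x] at hrate
  rw [mul_left_cancel₀ (hpos x t).ne' hrate]
  exact ⟨rfl, sum_fderiv_flux_add_le_sum_fderiv_fderiv_rpow (fun y => hwb y t)
    (fun y => hpos y t) (fun i => (hslice i).of_le one_le_two) (by linarith) x _⟩

/-- If `u^1,...,u^k` are `C²` solutions of `∂_t u^i = ∇·(m|𝐮|^{m-1}∇u^i)` with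
`w̄ = |𝐮| > 0`, then `w̄` satisfies
`∂_t w̄ = ∇·(m w̄^{m-1} ∇w̄) + m w̄^{m-2}(|∇w̄|² − ∑_i |∇u^i|²)` and in particular
`∂_t w̄ ≤ Δ(w̄^m)`. -/
theorem stmt7 (n k : ℕ) (hn : 0 < n) (hk : 0 < k) (m : ℝ) (hm : 1 < m)
    (u : Fin k → EuclideanSpace ℝ (Fin n) → ℝ → ℝ)
    (hsmooth : ∀ i, ContDiff ℝ 2 (fun p : EuclideanSpace ℝ (Fin n) × ℝ => u i p.1 p.2))
    (wb : EuclideanSpace ℝ (Fin n) → ℝ → ℝ)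
    (hwb : ∀ x t, wb x t = Real.sqrt (∑ i, (u i x t) ^ 2))
    (hpos : ∀ x t, 0 < wb x t)
    (heq : ∀ i x t, deriv (fun s => u i x s) t
      = ∑ j : Fin n,
          fderiv ℝ (fun y =>
            m * (wb y t) ^ (m - 1)
              * fderiv ℝ (fun z => u i z t) y (EuclideanSpace.single j 1))
            x (EuclideanSpace.single j 1)) :
    ∀ x t,
      deriv (fun s => wb x s) t
        = (∑ j : Fin n,
            fderiv ℝ (fun y =>
              m * (wb y t) ^ (m - 1)
                * fderiv ℝ (fun z => wb z t) y (EuclideanSpace.single j 1))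
              x (EuclideanSpace.single j 1))
          + m * (wb x t) ^ (m - 2)
              * ((∑ j : Fin n, (fderiv ℝ (fun z => wb z t) x (EuclideanSpace.single j 1)) ^ 2)
                - ∑ i, ∑ j : Fin n,
                    (fderiv ℝ (fun z => u i z t) x (EuclideanSpace.single j 1)) ^ 2)
      ∧ deriv (fun s => wb x s) t
          ≤ ∑ j : Fin n,
              fderiv ℝ (fun y =>
                fderiv ℝ (fun z => (wb z t) ^ m) y (EuclideanSpace.single j 1))
                x (EuclideanSpace.single j 1) :=
  stmt7_general n k m hm u hsmooth wb hwb hpos heq
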